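/- Let γ_1, …, γ_n ∈ ℝ^n be linearly independent and s_1, …, s_n ∈ ℝ, and consider the random binomial system h given by h_k(x) = a_k exp(γ_kᵀx + s_k) + b_k, k = 1, …, n, where the a_k and b_k are i.i.d. standard Gaussian random variables. Let B := {x ∈ ℝ^n : γ_kᵀx + s_k ≤ 0 for all k}. Then E_h #Z_r(h, B) = 4^{-n}. -/

import Mathlib

open MeasureTheory ProbabilityTheory Set

/-- The random binomial system `h_k(x) = a_k exp(γ_kᵀ x + s_k) + b_k`. -/
noncomputable def binomialSystem {n : ℕ} (γ : Fin n → Fin n → ℝ) (s : Fin n → ℝ)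
    (ab : (Fin n → ℝ) × (Fin n → ℝ)) (x : Fin n → ℝ) : Fin n → ℝ :=
  fun k => ab.1 k * Real.exp ((∑ i, γ k i * x i) + s k) + ab.2 k

/-!
On `B`, a zero of `h` satisfies `exp (γₖᵀx + sₖ) = -bₖ / aₖ ≤ 1`, and it is regular exactly when
every `aₖ ≠ 0`. As `x ↦ (γₖᵀx + sₖ)ₖ` is an affine bijection, `Z_r(h, B)` is a single point when
every ratio `-bₖ / aₖ` lies in `(0, 1]` and is empty otherwise. The expectation is therefore the
probability of that event, which by independence is the `n`-th power of `P(-b / a ∈ (0, 1])` for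
two independent standard Gaussians `a, b`. The law of `-b / a` has no atoms and is invariant under
`t ↦ -t` (flip the sign of `b`) and under `t ↦ t⁻¹` (swap `a` and `b`); so it gives mass `1/2` to
`(0, ∞)`, split evenly between `(0, 1]` and `[1, ∞)`.
-/

section Symmetric

variable {ρ : Measure ℝ} [IsProbabilityMeasure ρ] [NullSingletonClass ρ]

theorem measure_Ioi_zero_eq_inv_two_of_map_neg (hneg : ρ.map Neg.neg = ρ) :
    ρ (Ioi 0) = 2⁻¹ := by
  have hsymm : ρ (Iio 0) = ρ (Ioi 0) := by
    conv_rhs => rw [← hneg, Measure.map_apply measurable_neg measurableSet_Ioi]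
    simp
  have hsum : ρ (Iio 0) + ρ (Ioi 0) = 1 := by
    rw [← measure_union Ioi_disjoint_Iio_same.symm measurableSet_Ioi,
      Iio_union_Ioi, measure_compl (measurableSet_singleton 0) (measure_ne_top _ _)]
    simp
  rw [hsymm] at hsum
  exact ENNReal.eq_inv_of_mul_eq_one_left (by rwa [mul_comm, two_mul])

theorem preimage_inv_Ici_one : Inv.inv ⁻¹' Ici (1 : ℝ) = Ioc 0 1 := by
  ext t
  simp only [mem_preimage, mem_Ici, mem_Ioc]
  constructor
  · intro h
    have ht : 0 < t := inv_pos.1 (one_pos.trans_le h)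
    exact ⟨ht, (one_le_inv₀ ht).1 h⟩
  · rintro ⟨ht, h⟩
    exact (one_le_inv₀ ht).2 h

theorem measure_Ioc_zero_one_eq_inv_four_of_map_neg_of_map_inv
    (hneg : ρ.map Neg.neg = ρ) (hinv : ρ.map Inv.inv = ρ) : ρ (Ioc 0 1) = 4⁻¹ := by
  have hIci : ρ (Ioc 0 1) = ρ (Ioi 1) := by
    rw [measure_congr (Ioi_ae_eq_Ici (μ := ρ)), ← preimage_inv_Ici_one,
      ← Measure.map_apply measurable_inv measurableSet_Ici, hinv]
  have hsum : ρ (Ioc 0 1) + ρ (Ioc 0 1) = 2⁻¹ := by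
    conv_rhs => rw [← measure_Ioi_zero_eq_inv_two_of_map_neg hneg,
      ← Ioc_union_Ioi_eq_Ioi zero_le_one]
    rw [measure_union Ioc_disjoint_Ioi_same measurableSet_Ioi, ← hIci]
  have hhalf : ρ (Ioc 0 1) = 2⁻¹ / 2 :=
    (ENNReal.eq_div_iff two_ne_zero ENNReal.ofNat_ne_top).2 (by rwa [two_mul])
  rw [hhalf, ENNReal.div_eq_inv_mul, ← ENNReal.mul_inv (by simp) (by simp)]
  norm_num

end Symmetric

noncomputable def negRatio (p : ℝ × ℝ) : ℝ := -p.2 / p.1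

@[fun_prop]
theorem measurable_negRatio : Measurable negRatio :=
  measurable_snd.neg.div measurable_fst

-- Also when a coordinate vanishes, since `x / 0 = 0 = 0⁻¹`.
theorem negRatio_swap (p : ℝ × ℝ) : negRatio p.swap = (negRatio p)⁻¹ := by
  simp only [negRatio, Prod.fst_swap, Prod.snd_swap, neg_div, inv_neg, inv_div]

theorem negRatio_map_neg_snd (p : ℝ × ℝ) : negRatio (Prod.map id Neg.neg p) = -negRatio p := by
  simp only [negRatio, Prod.map_fst, Prod.map_snd, id, neg_div]

theorem negRatio_preimage_singleton_subset (t : ℝ) :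
    negRatio ⁻¹' {t} ⊆ {p | p.1 = 0} ∪ {p | p.2 = -t * p.1} := by
  intro p hp
  by_cases h : p.1 = 0
  · exact Or.inl h
  · right
    simp only [mem_preimage, mem_singleton_iff, negRatio, div_eq_iff h] at hp
    change p.2 = -t * p.1
    linarith

theorem exp_eq_negRatio_iff {a b u : ℝ} :
    Real.exp u = negRatio (a, b) ↔ a * Real.exp u + b = 0 ∧ a ≠ 0 := by
  constructor
  · intro he
    have ha : a ≠ 0 := by
      rintro rfl
      simp [negRatio, Real.exp_ne_zero] at he
    refine ⟨?_, ha⟩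
    rw [he, negRatio]
    field_simp
    ring
  · rintro ⟨hz, ha⟩
    rw [negRatio, eq_div_iff ha]
    linarith

section NegRatio

variable {μ : Measure ℝ} [SFinite μ]

theorem nullSingletonClass_map_negRatio [NullSingletonClass μ] :
    NullSingletonClass ((μ.prod μ).map negRatio) := by
  refine ⟨fun t => ?_⟩
  rw [Measure.map_apply measurable_negRatio (measurableSet_singleton t)]
  refine measure_mono_null (negRatio_preimage_singleton_subset t) (measure_union_null ?_ ?_)
  · have : {p : ℝ × ℝ | p.1 = 0} = {0} ×ˢ univ := by ext; simp
    rw [this, Measure.prod_prod, measure_singleton, zero_mul]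
  · rw [Measure.prod_apply (measurableSet_eq_fun measurable_snd (measurable_fst.const_mul _))]
    simp

theorem map_negRatio_map_neg (hμ : μ.map Neg.neg = μ) :
    ((μ.prod μ).map negRatio).map Neg.neg = (μ.prod μ).map negRatio := by
  have hflip : MeasurePreserving (Prod.map id Neg.neg) (μ.prod μ) (μ.prod μ) :=
    (MeasurePreserving.id μ).prod ⟨measurable_neg, hμ⟩
  rw [Measure.map_map measurable_neg measurable_negRatio]
  conv_rhs => rw [← hflip.map_eq, Measure.map_map measurable_negRatio hflip.measurable]
  congr 1
  ext p
  exact (negRatio_map_neg_snd p).symm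

theorem map_negRatio_map_inv :
    ((μ.prod μ).map negRatio).map Inv.inv = (μ.prod μ).map negRatio := by
  rw [Measure.map_map measurable_inv measurable_negRatio]
  conv_rhs => rw [← (Measure.measurePreserving_swap (μ := μ) (ν := μ)).map_eq,
    Measure.map_map measurable_negRatio measurable_swap]
  congr 1
  ext p
  exact (negRatio_swap p).symm

end NegRatio

theorem measure_negRatio_preimage_Ioc_zero_one {μ : Measure ℝ} [IsProbabilityMeasure μ]
    [NullSingletonClass μ] (hμ : μ.map Neg.neg = μ) :
    (μ.prod μ) (negRatio ⁻¹' Ioc 0 1) = 4⁻¹ := by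
  have := nullSingletonClass_map_negRatio (μ := μ)
  have := Measure.isProbabilityMeasure_map (μ := μ.prod μ) measurable_negRatio.aemeasurable
  rw [← Measure.map_apply measurable_negRatio measurableSet_Ioc]
  exact measure_Ioc_zero_one_eq_inv_four_of_map_neg_of_map_inv (map_negRatio_map_neg hμ)
    map_negRatio_map_inv

theorem MeasureTheory.Measure.pi_prod_pi_apply_setOf_forall {ι α β : Type*} [Fintype ι]
    [MeasurableSpace α] [MeasurableSpace β] (μ : ι → Measure α) (ν : ι → Measure β)
    [∀ i, SigmaFinite (μ i)] [∀ i, SigmaFinite (ν i)] (C : ι → Set (α × β)) :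
    ((Measure.pi μ).prod (Measure.pi ν)) {ab | ∀ i, (ab.1 i, ab.2 i) ∈ C i}
      = ∏ i, ((μ i).prod (ν i)) (C i) := by
  rw [← (measurePreserving_arrowProdEquivProdArrow α β ι μ ν).measure_preimage_equiv,
    ← Measure.pi_pi]
  congr 1
  ext f
  simp [MeasurableEquiv.arrowProdEquivProdArrow, Equiv.arrowProdEquivProdArrow]

def regularZeros {E : Type*} [NormedAddCommGroup E] [NormedSpace ℝ E] (h : E → E) (B : Set E) :
    Set E :=
  {x | x ∈ B ∧ h x = 0 ∧ Function.Bijective (fderiv ℝ h x)}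

section BinomialSystem

variable {n : ℕ} {γ : Fin n → Fin n → ℝ} {s : Fin n → ℝ} {ab : (Fin n → ℝ) × (Fin n → ℝ)}

theorem hasFDerivAt_binomialSystem (x : Fin n → ℝ) :
    HasFDerivAt (binomialSystem γ s ab)
      (Matrix.toLin' (Matrix.diagonal (fun k => ab.1 k * Real.exp (∑ i, γ k i * x i + s k))
        * Matrix.of γ)).toContinuousLinearMap x := by
  refine hasFDerivAt_pi'' fun k => ?_
  let Γk := (ContinuousLinearMap.proj k).comp (Matrix.toLin' (Matrix.of γ)).toContinuousLinearMap
  have hlin : HasFDerivAt (fun x : Fin n → ℝ => ∑ i, γ k i * x i + s k) Γk x :=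
    Γk.hasFDerivAt.add_const (s k)
  refine ((hlin.exp.const_mul (ab.1 k)).add_const (ab.2 k)).congr_fderiv ?_
  refine ContinuousLinearMap.ext fun v => ?_
  simp only [Γk, smul_apply, ContinuousLinearMap.comp_apply,
    ContinuousLinearMap.proj_apply, LinearMap.coe_toContinuousLinearMap', Matrix.toLin'_apply,
    ← Matrix.mulVec_mulVec, Matrix.mulVec_diagonal, smul_eq_mul, mul_assoc]

theorem bijective_fderiv_binomialSystem_iff (hγ : LinearIndependent ℝ γ) (x : Fin n → ℝ) :
    Function.Bijective (fderiv ℝ (binomialSystem γ s ab) x) ↔ ∀ k, ab.1 k ≠ 0 := by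
  have hΓ : IsUnit (Matrix.of γ) := Matrix.linearIndependent_rows_iff_isUnit.1 hγ
  rw [(hasFDerivAt_binomialSystem x).fderiv, LinearMap.coe_toContinuousLinearMap',
    Matrix.toLin'_apply', Matrix.coe_mulVecLin, Function.Bijective,
    Matrix.mulVec_injective_iff_isUnit, Matrix.mulVec_surjective_iff_isUnit, and_self,
    ← hΓ.unit_spec, Units.isUnit_mul_units, Matrix.isUnit_diagonal, Pi.isUnit_iff]
  simp [Real.exp_ne_zero]

theorem mem_regularZeros_binomialSystem_iff (hγ : LinearIndependent ℝ γ) (x : Fin n → ℝ) :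
    x ∈ regularZeros (binomialSystem γ s ab) {x | ∀ k, ∑ i, γ k i * x i + s k ≤ 0} ↔
      ∀ k, Real.exp (∑ i, γ k i * x i + s k) = negRatio (ab.1 k, ab.2 k) ∧
        ∑ i, γ k i * x i + s k ≤ 0 := by
  simp only [regularZeros, mem_ofPred_eq, bijective_fderiv_binomialSystem_iff hγ, funext_iff,
    binomialSystem, Pi.zero_apply, exp_eq_negRatio_iff, ← forall_and]
  exact forall_congr' fun k => by tauto

theorem regularZeros_binomialSystem_subsingleton (hγ : LinearIndependent ℝ γ) :
    (regularZeros (binomialSystem γ s ab) {x | ∀ k, ∑ i, γ k i * x i + s k ≤ 0}).Subsingleton := by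
  intro x hx y hy
  rw [mem_regularZeros_binomialSystem_iff hγ] at hx hy
  refine Matrix.mulVec_injective_iff_isUnit.2 (Matrix.linearIndependent_rows_iff_isUnit.1 hγ)
    (funext fun k => ?_)
  have := Real.exp_injective ((hx k).1.trans (hy k).1.symm)
  change ∑ i, γ k i * x i = ∑ i, γ k i * y i
  linarith

theorem regularZeros_binomialSystem_nonempty_iff (hγ : LinearIndependent ℝ γ) :
    (regularZeros (binomialSystem γ s ab) {x | ∀ k, ∑ i, γ k i * x i + s k ≤ 0}).Nonempty ↔
      ∀ k, negRatio (ab.1 k, ab.2 k) ∈ Ioc 0 1 := by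
  constructor
  · rintro ⟨x, hx⟩ k
    obtain ⟨he, hu⟩ := (mem_regularZeros_binomialSystem_iff hγ x).1 hx k
    rw [← he]
    exact ⟨Real.exp_pos _, Real.exp_le_one_iff.2 hu⟩
  · intro hab
    obtain ⟨x, hx⟩ := Matrix.mulVec_surjective_iff_isUnit.2
      (Matrix.linearIndependent_rows_iff_isUnit.1 hγ)
      (fun k => Real.log (negRatio (ab.1 k, ab.2 k)) - s k)
    refine ⟨x, (mem_regularZeros_binomialSystem_iff hγ x).2 fun k => ?_⟩
    have hu : ∑ i, γ k i * x i + s k = Real.log (negRatio (ab.1 k, ab.2 k)) :=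
      eq_sub_iff_add_eq.1 (congrFun hx k)
    rw [hu, Real.exp_log (hab k).1]
    exact ⟨rfl, Real.log_nonpos (hab k).1.le (hab k).2⟩

theorem encard_regularZeros_binomialSystem (hγ : LinearIndependent ℝ γ)
    (ab : (Fin n → ℝ) × (Fin n → ℝ)) :
    ((regularZeros (binomialSystem γ s ab) {x | ∀ k, ∑ i, γ k i * x i + s k ≤ 0}).encard : ENNReal)
      = {ab : (Fin n → ℝ) × (Fin n → ℝ) | ∀ k, negRatio (ab.1 k, ab.2 k) ∈ Ioc 0 1}.indicator 1
        ab := by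
  rcases (regularZeros (binomialSystem γ s ab) _).eq_empty_or_nonempty with hempty | ⟨x, hx⟩
  · have hab := mt (regularZeros_binomialSystem_nonempty_iff hγ).2
      (not_nonempty_iff_eq_empty.2 hempty)
    simp [hempty, hab, -mem_Ioc]
  · have hab := (regularZeros_binomialSystem_nonempty_iff hγ).1 ⟨x, hx⟩
    simp [(regularZeros_binomialSystem_subsingleton hγ).eq_singleton_of_mem hx, hab, -mem_Ioc]

end BinomialSystem

theorem expected_regular_zeros_binomial_eq
    (n : ℕ) (γ : Fin n → Fin n → ℝ) (hγ : LinearIndependent ℝ γ) (s : Fin n → ℝ)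
    (B : Set (Fin n → ℝ)) (hB : B = {x | ∀ k, (∑ i, γ k i * x i) + s k ≤ 0}) :
    ∫⁻ ab, (({x | x ∈ B ∧ binomialSystem γ s ab x = 0 ∧
          Function.Bijective (fderiv ℝ (binomialSystem γ s ab) x)}).encard : ENNReal)
        ∂((Measure.pi fun _ : Fin n => gaussianReal 0 1).prod
            (Measure.pi fun _ : Fin n => gaussianReal 0 1))
      = ((4 : ENNReal) ^ n)⁻¹ := by
  subst hB
  have hE : MeasurableSet
      {ab : (Fin n → ℝ) × (Fin n → ℝ) | ∀ k, negRatio (ab.1 k, ab.2 k) ∈ Ioc 0 1} := by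
    simp only [ofPred_forall]
    exact MeasurableSet.iInter fun k => measurableSet_Ioc.preimage (by fun_prop)
  have := nullSingletonClass_gaussianReal (μ := 0) one_ne_zero
  have hneg : (gaussianReal 0 1).map Neg.neg = gaussianReal 0 1 := by
    simpa using gaussianReal_map_neg (μ := 0) (v := 1)
  refine (lintegral_congr (encard_regularZeros_binomialSystem hγ)).trans ?_
  rw [lintegral_indicator_one hE]
  refine (Measure.pi_prod_pi_apply_setOf_forall _ _ fun _ => negRatio ⁻¹' Ioc 0 1).trans ?_
  simp [measure_negRatio_preimage_Ioc_zero_one hneg, ENNReal.inv_pow]
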